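/- Let ρ_η = η |N00N⟩⟨N00N| + (1-η)|00⟩⟨00| where |N00N⟩ = (|0N⟩ - e^{iNα}|N0⟩)/√2, restricted to the span of {|0⟩,|N⟩} on each side. Then its reduced state on Bob's side is σ = (1 - η/2)|0⟩⟨0| + (η/2)|N⟩⟨N|, and the channel T given by the state-channel duality satisfies T*(A) = U* Λ_r*(A) U, where r = √(η/(2-η)), Λ_r* is the amplitude damping channel and U = |0⟩⟨N| - e^{iNα}|N⟩⟨0| is unitary. -/
import Mathlib


open Matrix BigOperators Kronecker ComplexOrder

noncomputable section

/-- The partial trace over the first (Alice's) tensor factor. -/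
def ptraceA (d : ℕ) (ρ : Matrix (Fin d × Fin d) (Fin d × Fin d) ℂ) :
    Matrix (Fin d) (Fin d) ℂ :=
  Matrix.of fun m m' => ∑ n, ρ (n, m) (n, m')

/-- The qubit amplitude damping channel (Heisenberg picture), entrywise form. -/
def damp (r : ℝ) (A : Matrix (Fin 2) (Fin 2) ℂ) : Matrix (Fin 2) (Fin 2) ℂ :=
  !![A 0 0, (r : ℂ) * A 0 1;
     (r : ℂ) * A 1 0, (r : ℂ) ^ 2 * A 1 1 + (1 - (r : ℂ) ^ 2) * A 0 0]

/-- For the noisy NOON state ρ_η = η|N00N⟩⟨N00N| + (1-η)|00⟩⟨00| in the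
span of {|0⟩,|N⟩} (basis index 0 ↔ |0⟩, 1 ↔ |N⟩): Bob's marginal is
σ = (1-η/2)|0⟩⟨0| + (η/2)|N⟩⟨N|, and the channel T from the state-channel duality
(characterized by σ^{1/2} T*(A) σ^{1/2} = tr_A[ρ(A⊗I)]ᵀ) satisfies
T*(A) = U* Λ_r*(A) U with r = √(η/(2-η)) and unitary U = |0⟩⟨N| - e^{iNα}|N⟩⟨0|. -/
theorem stmt6 (Nph : ℕ) (α η : ℝ) (hη0 : 0 < η) (hη1 : η < 1)
    (ψ : Fin 2 × Fin 2 → ℂ)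
    (hψ : ψ = fun p => if p = (0, 1) then ((Real.sqrt 2)⁻¹ : ℂ)
      else if p = (1, 0) then
        -Complex.exp (Complex.I * Nph * α) * ((Real.sqrt 2)⁻¹ : ℂ)
      else 0)
    (e00 : Fin 2 × Fin 2 → ℂ) (he : e00 = fun p => if p = (0, 0) then 1 else 0)
    (ρ : Matrix (Fin 2 × Fin 2) (Fin 2 × Fin 2) ℂ)
    (hρ : ρ = (η : ℂ) • vecMulVec ψ (star ψ) + ((1 - η : ℝ) : ℂ) • vecMulVec e00 (star e00))
    (r : ℝ) (hr : r = Real.sqrt (η / (2 - η)))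
    (U : Matrix (Fin 2) (Fin 2) ℂ)
    (hU : U = !![0, 1; -Complex.exp (Complex.I * Nph * α), 0])
    (sqrtσ : Matrix (Fin 2) (Fin 2) ℂ)
    (hσr : sqrtσ = Matrix.diagonal ![(Real.sqrt (1 - η / 2) : ℂ), (Real.sqrt (η / 2) : ℂ)]) :
    ptraceA 2 ρ = Matrix.diagonal ![((1 - η / 2 : ℝ) : ℂ), ((η / 2 : ℝ) : ℂ)] ∧
    Uᴴ * U = 1 ∧
    (∀ A : Matrix (Fin 2) (Fin 2) ℂ,
      sqrtσ * (Uᴴ * damp r A * U) * sqrtσ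
        = (ptraceA 2 (ρ * (A ⊗ₖ (1 : Matrix (Fin 2) (Fin 2) ℂ))))ᵀ) := by
  subst hψ he hρ hU hσr hr
  have hcc : (starRingEnd ℂ) (Complex.exp (Complex.I * Nph * α)) *
      Complex.exp (Complex.I * Nph * α) = 1 := by
    rw [← Complex.exp_conj, ← Complex.exp_add]
    simp
  have h2η : (2:ℝ) - η ≠ 0 := by linarith
  have h2 : ((Real.sqrt 2 : ℝ) : ℂ)⁻¹ * ((Real.sqrt 2 : ℝ) : ℂ)⁻¹ = 1/2 := by
    rw [← mul_inv]
    norm_cast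
    rw [Real.mul_self_sqrt (by norm_num)]
    norm_num
  have ha : ((Real.sqrt (1 - η/2) : ℝ) : ℂ) * ((Real.sqrt (1 - η/2) : ℝ) : ℂ) = 1 - (η:ℂ)/2 := by
    norm_cast
    rw [Real.mul_self_sqrt (by linarith)]
  have hb : ((Real.sqrt (η/2) : ℝ) : ℂ) * ((Real.sqrt (η/2) : ℝ) : ℂ) = (η:ℂ)/2 := by
    norm_cast
    rw [Real.mul_self_sqrt (by linarith)]
  have hrnn : (0:ℝ) ≤ η/(2-η) := div_nonneg (le_of_lt hη0) (by linarith)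
  have habr : ((Real.sqrt (1 - η/2) : ℝ) : ℂ) * ((Real.sqrt (η/(2-η)) : ℝ) : ℂ) *
      ((Real.sqrt (η/2) : ℝ) : ℂ) = (η:ℂ)/2 := by
    norm_cast
    rw [← Real.sqrt_mul (by linarith), ← Real.sqrt_mul (mul_nonneg (by linarith) hrnn)]
    have : (1 - η/2) * (η/(2-η)) * (η/2) = (η/2)^2 := by
      field_simp
    rw [this, Real.sqrt_sq (by linarith)]
  have har : ((Real.sqrt (1 - η/2) : ℝ) : ℂ) * ((Real.sqrt (1 - η/2) : ℝ) : ℂ) *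
      (((Real.sqrt (η/(2-η)) : ℝ) : ℂ) * ((Real.sqrt (η/(2-η)) : ℝ) : ℂ)) = (η:ℂ)/2 := by
    norm_cast
    rw [Real.mul_self_sqrt (by linarith), Real.mul_self_sqrt hrnn]
    field_simp
  have hsd : ((Real.sqrt (η/2) : ℝ) : ℂ) = ((Real.sqrt η : ℝ) : ℂ) / ((Real.sqrt 2 : ℝ) : ℂ) := by
    norm_cast
    exact Real.sqrt_div hη0.le 2
  have hb' := hsd ▸ hb
  have habr' := hsd ▸ habr
  refine ⟨?_, ?_, ?_⟩
  · ext i j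
    fin_cases i <;> fin_cases j <;>
      simp [ptraceA, vecMulVec_apply, Fin.sum_univ_succ]
    · linear_combination ((η:ℂ) * ((Real.sqrt 2 : ℝ) : ℂ)⁻¹ * ((Real.sqrt 2 : ℝ) : ℂ)⁻¹) * hcc
        + (η:ℂ) * h2
    · linear_combination (η:ℂ) * h2
  · ext i j
    fin_cases i <;> fin_cases j <;>
      simp [Matrix.mul_apply, Fin.sum_univ_succ, Matrix.one_apply] <;>
      linear_combination hcc
  · intro A
    ext i j
    fin_cases i <;> fin_cases j <;>
      simp [ptraceA, vecMulVec_apply, Fin.sum_univ_succ, Matrix.mul_apply,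
        kroneckerMap_apply, damp, Matrix.one_apply, Fintype.sum_prod_type,
        Prod.mk.injEq]
    · linear_combination
        (((Real.sqrt (1 - η/2) : ℂ) * (Real.sqrt (1 - η/2) : ℂ) *
            ((Real.sqrt (η/(2-η)) : ℂ) * (Real.sqrt (η/(2-η)) : ℂ))
          - (η:ℂ) * ((Real.sqrt 2 : ℂ))⁻¹ * ((Real.sqrt 2 : ℂ))⁻¹) * A 1 1
          + ((Real.sqrt (1 - η/2) : ℂ) * (Real.sqrt (1 - η/2) : ℂ)
            - (Real.sqrt (1 - η/2) : ℂ) * (Real.sqrt (1 - η/2) : ℂ) *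
              ((Real.sqrt (η/(2-η)) : ℂ) * (Real.sqrt (η/(2-η)) : ℂ))) * A 0 0) * hcc
        + (A 1 1 - A 0 0) * har + (-(η:ℂ) * A 1 1) * h2 + A 0 0 * ha
    · linear_combination
        ((starRingEnd ℂ) (Complex.exp (Complex.I * Nph * α)) * A 1 0) * habr'
        - (η:ℂ) * (starRingEnd ℂ) (Complex.exp (Complex.I * Nph * α)) * A 1 0 * h2
    · linear_combination
        (Complex.exp (Complex.I * Nph * α) * A 0 1) * habr'
        - (η:ℂ) * Complex.exp (Complex.I * Nph * α) * A 0 1 * h2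
    · linear_combination A 0 0 * hb' - (η:ℂ) * A 0 0 * h2
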